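/- arXiv:2012.10353 — 2 statements merged into one kernel-verified Lean document; each statement's English description precedes it below -/
import Mathlib

section
/- Let j ≥ 1 and m ≥ 0 be integers. Work in the field ℚ(u) of rational functions and set q := u^{2j}, so that [n]_q := q^{n/2} − q^{−n/2} = u^{jn} − u^{−jn}. Then (1/[j]_q) · Σ_{s=0}^{j−1} (−1)^s · u^{(2m+j)(C(j,2) − js)} / ([j−s−1]_q! · [s]_q!) = (1/[j+m]_q) · [ j+m choose j ]_q, where C(j,2) = j(j−1)/2. (This is the hook-sum evaluation carried out in Section 3.3: writing the framed one-legged topological vertex sum over hook partitions (j−s,1^s) via the hook formula for principally specialised Schur functions, it yields the closed form O_{da}((ℙ(1,a,b))^op) = ((−1)^{db}/(da·[(a+b)d]_q)) [ (a+b)d choose ad ]_q upon setting j = ad, m = bd.) -/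
/-!
STATEMENT 7: the hook-sum evaluation of Section 3.3. In ℚ(u), with q = u^{2j}
(so [n]_q = u^{jn} − u^{−jn}),
(1/[j]_q) · Σ_{s=0}^{j−1} (−1)^s · u^{(2m+j)(C(j,2) − js)} / ([j−s−1]_q!·[s]_q!)
  = (1/[j+m]_q) · [ j+m choose j ]_q.
-/

open Finset

noncomputable section

/-- The symmetrised q-integer `[n]_q = u^{jn} − u^{−jn}` in `ℚ(u)`, for `q = u^{2j}`. -/
def qint (j n : ℤ) : RatFunc ℚ := RatFunc.X ^ (j * n) - RatFunc.X ^ (-(j * n))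

/-- The symmetrised q-factorial `[n]_q!` in `ℚ(u)`, for `q = u^{2j}`. -/
def qfact (j : ℤ) (n : ℕ) : RatFunc ℚ := ∏ i ∈ Finset.range n, qint j ((i : ℤ) + 1)

/-- The symmetrised q-binomial `[n choose m]_q = [n]_q!/([m]_q!·[n−m]_q!)` in `ℚ(u)`, for
`q = u^{2j}`; it is 0 for `m > n`. -/
def qbinom (j : ℤ) (n m : ℕ) : RatFunc ℚ :=
  if m ≤ n then qfact j n / (qfact j m * qfact j (n - m)) else 0

private lemma X_pow_ne_one (k : ℕ) (hk : k ≠ 0) : (RatFunc.X : RatFunc ℚ) ^ k ≠ 1 := by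
  intro h
  have h2 : (algebraMap (Polynomial ℚ) (RatFunc ℚ)) (Polynomial.X ^ k) =
      (algebraMap (Polynomial ℚ) (RatFunc ℚ)) 1 := by
    rw [map_pow, map_one, RatFunc.algebraMap_X, h]
  have h3 := RatFunc.algebraMap_injective ℚ h2
  have hdeg := congrArg Polynomial.natDegree h3
  simp [Polynomial.natDegree_X_pow] at hdeg
  exact hk hdeg

private lemma X_zpow_ne_one (e : ℤ) (he : e ≠ 0) : (RatFunc.X : RatFunc ℚ) ^ e ≠ 1 := by
  rcases e with k | k
  · rw [Int.ofNat_eq_coe, zpow_natCast]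
    exact X_pow_ne_one k (by simpa using he)
  · rw [zpow_negSucc]
    intro h
    exact X_pow_ne_one (k+1) (by omega) (inv_eq_one.mp h)

private lemma qint_ne_zero {a c : ℤ} (h : a * c ≠ 0) : qint a c ≠ 0 := by
  intro h0
  rw [qint, sub_eq_zero] at h0
  have hX : (RatFunc.X : RatFunc ℚ) ≠ 0 := RatFunc.X_ne_zero
  have h1 : (RatFunc.X : RatFunc ℚ) ^ (a*c + a*c) = 1 := by
    rw [zpow_add₀ hX]
    nth_rewrite 2 [h0]
    rw [← zpow_add₀ hX]
    simp
  exact X_zpow_ne_one _ (by omega) h1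

private lemma qfact_ne_zero {a : ℤ} (ha : a ≠ 0) (n : ℕ) : qfact a n ≠ 0 := by
  rw [qfact]
  apply Finset.prod_ne_zero_iff.mpr
  intro i _
  exact qint_ne_zero (by positivity)

private lemma keyB {K : Type*} [Field K] (Y Z : K) (hYZ : Y * Z = 1)
    (hQ : ∀ k : ℕ, Y ^ (k+1) - Z ^ (k+1) ≠ 0) (z : K) :
    ∀ n : ℕ,
      (∏ i ∈ range n, (Y ^ (i+1) - Z ^ (i+1))) *
        ∑ s ∈ range (n+1),
          Y ^ s * Z ^ (n*s) * z ^ s /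
            ((∏ i ∈ range s, (Y ^ (i+1) - Z ^ (i+1))) *
             (∏ i ∈ range (n - s), (Y ^ (i+1) - Z ^ (i+1)))) =
      ∏ i ∈ range n, (1 + z * Z ^ (2*i)) := by
  have hpow : ∀ k : ℕ, Y ^ k * Z ^ k = 1 := fun k => by rw [← mul_pow, hYZ, one_pow]
  set f : ℕ → K := fun k => ∏ i ∈ range k, (Y ^ (i+1) - Z ^ (i+1)) with hf
  have hf0 : f 0 = 1 := by simp [hf]
  have hfs : ∀ k : ℕ, f (k+1) = f k * (Y ^ (k+1) - Z ^ (k+1)) := fun k => by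
    simp [hf, prod_range_succ]
  have hfne : ∀ k : ℕ, f k ≠ 0 := fun k =>
    Finset.prod_ne_zero_iff.mpr (fun i _ => hQ i)
  intro n
  induction n with
  | zero => simp [hf0]
  | succ n ih =>
    conv_rhs => rw [prod_range_succ]
    rw [← ih, Finset.mul_sum, Finset.sum_range_succ']
    -- the s = 0 terms
    have h00 : f (n+1) * (Y ^ 0 * Z ^ ((n+1)*0) * z ^ 0 / (f 0 * f (n+1-0))) = 1 := by
      simp only [pow_zero, Nat.mul_zero, Nat.sub_zero, hf0, one_mul]
      rw [mul_one_div]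
      exact div_self (hfne (n+1))
    rw [h00]
    -- pointwise identity for shifted terms
    have hpt : ∀ s ∈ range (n+1),
        f (n+1) * (Y ^ (s+1) * Z ^ ((n+1)*(s+1)) * z ^ (s+1) /
            (f (s+1) * f (n+1-(s+1)))) =
          (f n * (Y ^ (s+1) * Z ^ (n*(s+1)) * z ^ (s+1)) * (Y ^ (n-s) - Z ^ (n-s)) /
            (f (s+1) * f (n-s))) +
          (f n * Z ^ (2*n) * (Y ^ s * Z ^ (n*s) * z ^ s) * z / (f s * f (n-s))) := by
      intro s hs
      rw [Finset.mem_range] at hs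
      obtain ⟨r, rfl⟩ : ∃ r, n = s + r := ⟨n - s, by omega⟩
      have hss : s + r + 1 - (s+1) = r := by omega
      have hss2 : s + r - s = r := by omega
      rw [hss, hss2]
      have key : (Y^(s+r+1) - Z^(s+r+1)) * (Y^(s+1) * Z^((s+r+1)*(s+1)))
          = Y^(s+1) * Z^((s+r)*(s+1)) * (Y^r - Z^r)
            + Z^(2*(s+r)) * (Y^s * Z^((s+r)*s)) * (Y^(s+1) - Z^(s+1)) := by
        linear_combination (Y^(s+r+1) * Z^((s+r)*(s+1))) * hpow (s+1)
          - (Y^(s+1) * Z^((s+r)*(s+1)+r)) * hpow s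
          - (Y^s * Z^(2*(s+r)+(s+r)*s+s+1)) * hpow 1
      calc f (s+r+1) * (Y ^ (s+1) * Z ^ ((s+r+1)*(s+1)) * z ^ (s+1) / (f (s+1) * f r))
          = ((Y^(s+r+1) - Z^(s+r+1)) * (Y^(s+1) * Z^((s+r+1)*(s+1)))) *
              (f (s+r) * z^(s+1) / (f (s+1) * f r)) := by rw [hfs (s+r)]; ring
        _ = (Y^(s+1) * Z^((s+r)*(s+1)) * (Y^r - Z^r)
              + Z^(2*(s+r)) * (Y^s * Z^((s+r)*s)) * (Y^(s+1) - Z^(s+1))) *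
              (f (s+r) * z^(s+1) / (f (s+1) * f r)) := by rw [key]
        _ = (f (s+r) * (Y ^ (s+1) * Z ^ ((s+r)*(s+1)) * z ^ (s+1)) * (Y ^ r - Z ^ r) /
              (f (s+1) * f r)) +
            (f (s+r) * Z ^ (2*(s+r)) * (Y ^ s * Z ^ ((s+r)*s) * z ^ s) * z / (f s * f r)) := by
            have hD : (f (s+r) * Z ^ (2*(s+r)) * (Y ^ s * Z ^ ((s+r)*s) * z ^ s) * z *
                  (Y^(s+1) - Z^(s+1))) / (f (s+1) * f r) =
                f (s+r) * Z ^ (2*(s+r)) * (Y ^ s * Z ^ ((s+r)*s) * z ^ s) * z / (f s * f r) := by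
              rw [hfs s]
              rw [show f (s+r) * Z ^ (2*(s+r)) * (Y ^ s * Z ^ ((s+r)*s) * z ^ s) * z *
                  (Y^(s+1) - Z^(s+1)) = (Y^(s+1) - Z^(s+1)) *
                  (f (s+r) * Z ^ (2*(s+r)) * (Y ^ s * Z ^ ((s+r)*s) * z ^ s) * z) from by ring,
                show f s * (Y^(s+1) - Z^(s+1)) * f r = (Y^(s+1) - Z^(s+1)) * (f s * f r) from by
                  ring]
              exact mul_div_mul_left _ _ (hQ s)
            rw [← hD, ← add_div]
            ring
    rw [Finset.sum_congr rfl hpt, Finset.sum_add_distrib]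
    have hB0 : f n * (Y ^ 0 * Z ^ (n*0) * z ^ 0 / (f 0 * f (n-0))) = 1 := by
      simp only [pow_zero, Nat.mul_zero, Nat.sub_zero, hf0, one_mul]
      rw [mul_one_div]
      exact div_self (hfne n)
    have hSB : f n * ∑ s ∈ range (n+1),
        Y ^ s * Z ^ (n*s) * z ^ s / (f s * f (n-s)) =
        1 + ∑ s ∈ range n,
          f n * (Y ^ (s+1) * Z ^ (n*(s+1)) * z ^ (s+1) / (f (s+1) * f (n-(s+1)))) := by
      rw [Finset.mul_sum, Finset.sum_range_succ']
      rw [hB0, add_comm]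
    have hE : ∑ s ∈ range (n+1),
        f n * (Y ^ (s+1) * Z ^ (n*(s+1)) * z ^ (s+1)) * (Y ^ (n-s) - Z ^ (n-s)) /
          (f (s+1) * f (n-s)) =
        ∑ s ∈ range n,
          f n * (Y ^ (s+1) * Z ^ (n*(s+1)) * z ^ (s+1) / (f (s+1) * f (n-(s+1)))) := by
      rw [Finset.sum_range_succ]
      have htop : f n * (Y ^ (n+1) * Z ^ (n*(n+1)) * z ^ (n+1)) * (Y ^ (n-n) - Z ^ (n-n)) /
          (f (n+1) * f (n-n)) = 0 := by
        simp [Nat.sub_self]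
      rw [htop, add_zero]
      refine Finset.sum_congr rfl (fun s hs => ?_)
      rw [Finset.mem_range] at hs
      obtain ⟨r, rfl⟩ : ∃ r, n = s + 1 + r := ⟨n - s - 1, by omega⟩
      have h1 : s + 1 + r - s = r + 1 := by omega
      have h2 : s + 1 + r - (s+1) = r := by omega
      rw [h1, h2]
      calc f (s+1+r) * (Y ^ (s+1) * Z ^ ((s+1+r)*(s+1)) * z ^ (s+1)) * (Y ^ (r+1) - Z ^ (r+1)) /
            (f (s+1) * f (r+1))
          = (Y ^ (r+1) - Z ^ (r+1)) *
              (f (s+1+r) * (Y ^ (s+1) * Z ^ ((s+1+r)*(s+1)) * z ^ (s+1))) /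
              ((Y ^ (r+1) - Z ^ (r+1)) * (f (s+1) * f r)) := by rw [hfs r]; ring
        _ = f (s+1+r) * (Y ^ (s+1) * Z ^ ((s+1+r)*(s+1)) * z ^ (s+1)) / (f (s+1) * f r) :=
            mul_div_mul_left _ _ (hQ r)
        _ = f (s+1+r) * (Y ^ (s+1) * Z ^ ((s+1+r)*(s+1)) * z ^ (s+1) / (f (s+1) * f r)) := by
            ring
    have hD : ∑ s ∈ range (n+1),
        f n * Z ^ (2*n) * (Y ^ s * Z ^ (n*s) * z ^ s) * z / (f s * f (n-s)) =
        z * Z ^ (2*n) * (f n * ∑ s ∈ range (n+1),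
          Y ^ s * Z ^ (n*s) * z ^ s / (f s * f (n-s))) := by
      rw [Finset.mul_sum, Finset.mul_sum]
      refine Finset.sum_congr rfl (fun s _ => ?_)
      ring
    rw [hE, hD, hSB]
    ring

private lemma Xzm (a : ℤ) (k : ℕ) :
    (RatFunc.X : RatFunc ℚ) ^ (a * (k:ℤ)) = ((RatFunc.X : RatFunc ℚ) ^ a) ^ k := by
  induction k with
  | zero => simp
  | succ k ih =>
    rw [show a * ((k+1:ℕ):ℤ) = a * (k:ℤ) + a from by push_cast; ring,
      zpow_add₀ RatFunc.X_ne_zero, ih, pow_succ]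

private lemma qint_nat (a : ℤ) (k : ℕ) :
    qint a (k:ℤ) = ((RatFunc.X : RatFunc ℚ) ^ a) ^ k - ((RatFunc.X : RatFunc ℚ) ^ (-a)) ^ k := by
  rw [qint, Xzm]
  congr 1
  rw [show -(a*(k:ℤ)) = (-a)*(k:ℤ) from by ring, Xzm]

private lemma qfact_eq (a : ℤ) (k : ℕ) :
    qfact a k = ∏ i ∈ range k,
      (((RatFunc.X : RatFunc ℚ) ^ a) ^ (i+1) - ((RatFunc.X : RatFunc ℚ) ^ (-a)) ^ (i+1)) := by
  refine Finset.prod_congr rfl fun i _ => ?_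
  rw [show ((i:ℤ)+1) = ((i+1:ℕ):ℤ) from by push_cast; ring, qint_nat]

private lemma choose2 (k : ℕ) : 2 * ((k+1).choose 2) = (k+1)*k := by
  induction k with
  | zero => rfl
  | succ k ih =>
    rw [Nat.choose_succ_succ (k+1) 1, Nat.choose_one_right, mul_add, ih]
    ring

private lemma sumP (m : ℕ) (n : ℕ) : 2 * (∑ i ∈ range n, (m+1+i)) = n*(2*m+n+1) := by
  induction n with
  | zero => simp
  | succ n ih => rw [Finset.sum_range_succ, mul_add, ih]; ring

theorem hook_sum_evaluation (j m : ℕ) (hj : 1 ≤ j) :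
    (1 / qint j j) *
        ∑ s ∈ Finset.range j,
          (-1 : RatFunc ℚ) ^ s *
              RatFunc.X ^ ((2 * (m : ℤ) + j) * ((j.choose 2 : ℤ) - j * s)) /
            (qfact j (j - s - 1) * qfact j s) =
      (1 / qint j (j + m)) * qbinom j (j + m) j := by
  obtain ⟨n, rfl⟩ : ∃ n, j = n + 1 := ⟨j - 1, by omega⟩
  set J : ℤ := ((n+1 : ℕ) : ℤ) with hJdef
  have hX : (RatFunc.X : RatFunc ℚ) ≠ 0 := RatFunc.X_ne_zero
  have hJ : J ≠ 0 := by rw [hJdef]; exact_mod_cast Nat.succ_ne_zero n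
  set Y := (RatFunc.X : RatFunc ℚ) ^ J with hYdef
  set Z := (RatFunc.X : RatFunc ℚ) ^ (-J) with hZdef
  have hYZ : Y * Z = 1 := by rw [hYdef, hZdef, ← zpow_add₀ hX]; simp
  have hpow : ∀ k : ℕ, Y ^ k * Z ^ k = 1 := fun k => by rw [← mul_pow, hYZ, one_pow]
  have hQeq : ∀ k : ℕ, qint J (k:ℤ) = Y^k - Z^k := fun k => by
    rw [qint_nat, ← hYdef, ← hZdef]
  have hQ : ∀ k : ℕ, Y^(k+1) - Z^(k+1) ≠ 0 := fun k => by
    rw [← hQeq (k+1)]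
    exact qint_ne_zero (mul_ne_zero hJ (by exact_mod_cast Nat.succ_ne_zero k))
  have hfe : ∀ k : ℕ, qfact J k = ∏ i ∈ range k, (Y^(i+1) - Z^(i+1)) := fun k => by
    rw [qfact_eq J k, ← hYdef, ← hZdef]
  have hfne : ∀ k, qfact J k ≠ 0 := qfact_ne_zero hJ
  have hkey := keyB Y Z hYZ hQ (-(Z^(2*(m+1)))) n
  simp only [← hfe] at hkey
  have hprod : ∏ i ∈ range n, (1 + -(Z^(2*(m+1))) * Z^(2*i)) =
      Z ^ (∑ i ∈ range n, (m+1+i)) * ∏ i ∈ range n, qint J ((m:ℤ)+1+i) := by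
    rw [← Finset.prod_pow_eq_pow_sum, ← Finset.prod_mul_distrib]
    refine Finset.prod_congr rfl fun i _ => ?_
    rw [show (m:ℤ)+1+(i:ℤ) = ((m+1+i:ℕ):ℤ) from by push_cast; ring, hQeq]
    linear_combination (-1 : RatFunc ℚ) * hpow (m+1+i)
  have h1 : (2:ℤ) * (((n+1).choose 2 : ℕ):ℤ) = ((n:ℤ)+1) * n := by
    exact_mod_cast choose2 n
  have h2 : (2:ℤ) * ((∑ i ∈ range n, (m+1+i) : ℕ):ℤ) = (n:ℤ)*(2*m+n+1) := by
    exact_mod_cast sumP m n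
  have hEP : (2*(m:ℤ)+J) * (((n+1).choose 2 : ℕ):ℤ)
      = J * ((∑ i ∈ range n, (m+1+i) : ℕ):ℤ) := by
    have h3 : J = (n:ℤ)+1 := by rw [hJdef]; push_cast; ring
    have hd : (2:ℤ) * ((2*(m:ℤ)+J) * (((n+1).choose 2 : ℕ):ℤ))
        = 2 * (J * ((∑ i ∈ range n, (m+1+i) : ℕ):ℤ)) := by
      linear_combination (2*(m:ℤ)+(n:ℤ)+1) * h1 - ((n:ℤ)+1) * h2 +
        (2*(((n+1).choose 2:ℕ):ℤ) - 2*((∑ i ∈ range n, (m+1+i) : ℕ):ℤ)) * h3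
    exact mul_left_cancel₀ two_ne_zero hd
  have hXE : (RatFunc.X : RatFunc ℚ) ^ ((2*(m:ℤ)+J) * (((n+1).choose 2:ℕ):ℤ)) *
      Z ^ (∑ i ∈ range n, (m+1+i)) = 1 := by
    rw [hZdef, ← Xzm, ← zpow_add₀ hX,
      show (2*(m:ℤ)+J) * (((n+1).choose 2:ℕ):ℤ) +
        (-J)*((∑ i ∈ range n, (m+1+i) : ℕ):ℤ) = 0 from by linarith [hEP]]
    exact zpow_zero _
  have hterm : ∀ s ∈ range (n+1),
      (-1 : RatFunc ℚ)^s *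
          (RatFunc.X : RatFunc ℚ) ^ ((2*(m:ℤ)+J) * ((((n+1).choose 2:ℕ):ℤ) - J*(s:ℤ))) /
        (qfact J (n+1-s-1) * qfact J s)
      = (RatFunc.X : RatFunc ℚ) ^ ((2*(m:ℤ)+J) * (((n+1).choose 2:ℕ):ℤ)) *
        (Y^s * Z^(n*s) * (-(Z^(2*(m+1))))^s / (qfact J s * qfact J (n-s))) := by
    intro s hs
    rw [Finset.mem_range] at hs
    have hsub : n+1-s-1 = n-s := by omega
    rw [hsub]
    have hc : (RatFunc.X : RatFunc ℚ) ^ ((2*(m:ℤ)+J) * ((((n+1).choose 2:ℕ):ℤ) - J*(s:ℤ))) =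
        (RatFunc.X : RatFunc ℚ) ^ ((2*(m:ℤ)+J) * (((n+1).choose 2:ℕ):ℤ)) *
          ((RatFunc.X : RatFunc ℚ)^(J*(s:ℤ)) * ((RatFunc.X : RatFunc ℚ)^((-J)*((n*s:ℕ):ℤ)) *
            (RatFunc.X : RatFunc ℚ)^((-J)*(((2*(m+1))*s : ℕ):ℤ)))) := by
      rw [← zpow_add₀ hX, ← zpow_add₀ hX, ← zpow_add₀ hX]
      congr 1
      rw [hJdef]
      push_cast
      ring
    have hnum : (-1:RatFunc ℚ)^s *
        (RatFunc.X : RatFunc ℚ) ^ ((2*(m:ℤ)+J) * ((((n+1).choose 2:ℕ):ℤ) - J*(s:ℤ)))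
        = (RatFunc.X : RatFunc ℚ) ^ ((2*(m:ℤ)+J) * (((n+1).choose 2:ℕ):ℤ)) *
          (Y^s * Z^(n*s) * (-(Z^(2*(m+1))))^s) := by
      rw [neg_pow (Z^(2*(m+1))) s, ← pow_mul Z (2*(m+1)) s, hYdef, hZdef,
        ← Xzm, ← Xzm, ← Xzm, hc]
      ring
    rw [mul_comm (qfact J (n-s)) (qfact J s), hnum, mul_div_assoc]
  rw [Finset.sum_congr rfl hterm, ← Finset.mul_sum]
  have hq1 : qfact J (n+1) = qfact J n * qint J J := by
    rw [qfact, Finset.prod_range_succ, ← qfact,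
      show ((n:ℤ)+1) = J from by rw [hJdef]; push_cast; ring]
  have hQnz : qint J J ≠ 0 := qint_ne_zero (mul_ne_zero hJ hJ)
  have hB : (∑ s ∈ range (n+1),
        Y^s * Z^(n*s) * (-(Z^(2*(m+1))))^s / (qfact J s * qfact J (n-s)))
      = Z ^ (∑ i ∈ range n, (m+1+i)) * (∏ i ∈ range n, qint J ((m:ℤ)+1+i)) / qfact J n := by
    rw [eq_div_iff (hfne n), mul_comm]
    exact hkey.trans hprod
  rw [hB]
  have hqm : qfact J (n+1+m) = qfact J m * (∏ i ∈ range n, qint J ((m:ℤ)+1+i)) *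
      qint J (J + (m:ℤ)) := by
    rw [show n+1+m = (m+n)+1 from by omega, qfact, Finset.prod_range_succ, ← qfact,
      show ((m+n:ℕ):ℤ)+1 = J + (m:ℤ) from by rw [hJdef]; push_cast; ring]
    congr 1
    rw [qfact, Finset.prod_range_add, ← qfact]
    congr 1
    refine Finset.prod_congr rfl fun i _ => ?_
    congr 1
    push_cast
    ring
  have hne2 : qint J (J + (m:ℤ)) ≠ 0 := by
    refine qint_ne_zero (mul_ne_zero hJ ?_)
    rw [hJdef]
    push_cast
    positivity
  rw [qbinom, if_pos (by omega : n+1 ≤ n+1+m), show n+1+m-(n+1) = m from by omega, hqm, hq1]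
  field_simp [hQnz, hne2, hfne n, hfne m]
  linear_combination (∏ i ∈ range n, qint J ((m:ℤ)+1+(i:ℤ))) * hXE
end
end

section
/- Let j ≥ 1 and m ≥ 1 be integers. Work in the polynomial ring ℚ(u)[Q] and set q := u^{2j}. Then Σ_{s=0}^{j−1} (−1)^s · u^{(2m−j)(C(j,2) − js)} · ∏_{k=0}^{j−1}(1 − Q·q^{k−s}) / ([j]_q·[j−s−1]_q!·[s]_q!) = Σ_{l=0}^{j} (−1)^l · Q^l · (1/[m+l]_q) · [ m+l choose j ]_q · [ j choose l ]_q, where C(j,2) = j(j−1)/2. (This polynomial identity in Q encodes the full one-holed open Gromov–Witten generating function of the framed resolved conifold geometry (Y^{[2]}_{(a,b)})^op computed in Section 4.3: the left-hand side is the hook-partition vertex sum with the conifold Kähler parameter Q, the right-hand side collects the closed forms of the degree-(l;j) open invariants, with m = bj/a.) -/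
/-!
STATEMENT 11: the generating-function identity in ℚ(u)[Q] encoding the one-holed open
Gromov–Witten invariants of the framed resolved conifold geometry (Section 4.3).
With q = u^{2j}:
Σ_{s=0}^{j−1} (−1)^s u^{(2m−j)(C(j,2)−js)} ∏_{k=0}^{j−1}(1 − Q·q^{k−s}) /
    ([j]_q·[j−s−1]_q!·[s]_q!)
  = Σ_{l=0}^{j} (−1)^l Q^l (1/[m+l]_q) [ m+l choose j ]_q [ j choose l ]_q.
-/

open Finset Polynomial

noncomputable section

abbrev KK := RatFunc ℚ
def xp (a : ℤ) : KK := RatFunc.X ^ a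

lemma X_ne : (RatFunc.X : KK) ≠ 0 := RatFunc.X_ne_zero

lemma xp_add (a b : ℤ) : xp (a + b) = xp a * xp b := zpow_add₀ X_ne a b

lemma xp_zero : xp 0 = 1 := zpow_zero _

lemma xp_ne_zero (a : ℤ) : xp a ≠ 0 := zpow_ne_zero a X_ne

lemma xp_neg (a : ℤ) : xp (-a) = (xp a)⁻¹ := zpow_neg _ a

lemma xp_mul_neg (a : ℤ) : xp a * xp (-a) = 1 := by
  rw [← xp_add]; simp [xp_zero]

lemma X_pow_ne_one_s11 {a : ℤ} (ha : a ≠ 0) : xp a ≠ 1 := by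
  intro h
  rcases lt_or_gt_of_ne ha with h1 | h1
  · have : xp (-a) = 1 := by
      have := xp_mul_neg a; rw [h, one_mul] at this; exact this
    lift (-a) to ℕ using by omega with b hb
    have hb0 : b ≠ 0 := by omega
    rw [xp, zpow_natCast] at this
    have : (Polynomial.X : Polynomial ℚ) ^ b = 1 := by
      have := this
      rw [show (RatFunc.X : KK) = algebraMap (Polynomial ℚ) KK Polynomial.X from rfl,
        ← map_pow, ← map_one (algebraMap (Polynomial ℚ) KK)] at this
      exact IsFractionRing.injective (Polynomial ℚ) KK this
    have := congrArg Polynomial.natDegree this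
    simp [Polynomial.natDegree_X_pow] at this
    omega
  · lift a to ℕ using by omega with b hb
    have hb0 : b ≠ 0 := by omega
    rw [xp, zpow_natCast] at h
    have : (Polynomial.X : Polynomial ℚ) ^ b = 1 := by
      rw [show (RatFunc.X : KK) = algebraMap (Polynomial ℚ) KK Polynomial.X from rfl,
        ← map_pow, ← map_one (algebraMap (Polynomial ℚ) KK)] at h
      exact IsFractionRing.injective (Polynomial ℚ) KK h
    have := congrArg Polynomial.natDegree this
    simp [Polynomial.natDegree_X_pow] at this
    omega

lemma qint_eq (j n : ℤ) : qint j n = xp (j * n) - xp (-(j * n)) := rfl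

lemma qint_ne_zero_s11 {j n : ℤ} (hj : 0 < j) (hn : 0 < n) : qint j n ≠ 0 := by
  rw [qint_eq, sub_ne_zero]
  intro h
  have h2 := xp_mul_neg (j * n)
  rw [← h, ← xp_add] at h2
  exact X_pow_ne_one_s11 (by positivity) h2

lemma qfact_succ (j : ℤ) (n : ℕ) : qfact j (n + 1) = qfact j n * qint j (n + 1) := by
  rw [qfact, Finset.prod_range_succ]; rfl

lemma qfact_zero (j : ℤ) : qfact j 0 = 1 := rfl

lemma qfact_ne_zero_s11 {j : ℤ} (hj : 0 < j) (n : ℕ) : qfact j n ≠ 0 := by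
  induction n with
  | zero => simp [qfact_zero]
  | succ n ih => rw [qfact_succ]; exact mul_ne_zero ih (qint_ne_zero_s11 hj (by positivity))

lemma qbinom_of_gt {j : ℤ} {n l : ℕ} (h : n < l) : qbinom j n l = 0 := by
  rw [qbinom, if_neg (by omega)]

lemma qbinom_eq (j : ℤ) {n l : ℕ} (h : l ≤ n) :
    qbinom j n l = qfact j n / (qfact j l * qfact j (n - l)) := by
  rw [qbinom, if_pos h]

lemma qbinom_self {j : ℤ} (hj : 0 < j) (n : ℕ) : qbinom j n n = 1 := by
  rw [qbinom_eq j le_rfl, Nat.sub_self, qfact_zero, mul_one,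
    div_self (qfact_ne_zero_s11 hj n)]

lemma qbinom_zero {j : ℤ} (hj : 0 < j) (n : ℕ) : qbinom j n 0 = 1 := by
  rw [qbinom_eq j (Nat.zero_le n), Nat.sub_zero, qfact_zero, one_mul,
    div_self (qfact_ne_zero_s11 hj n)]

lemma qint_pascal (j : ℤ) (n l : ℤ) :
    qint j (n + 1) = xp (-(j * (l + 1))) * qint j (n - l) + xp (j * (n - l)) * qint j (l + 1) := by
  simp only [qint_eq, mul_sub, ← xp_add]
  have h1 : -(j * (l+1)) + (j * n - j * l) = j * (n - 2*l - 1) := by ring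
  have h2 : -(j * (l+1)) + -(j * n - j * l) = -(j * (n+1)) := by ring
  have h3 : j * n - j * l + j * (l+1) = j * (n+1) := by ring
  have h4 : j * n - j * l + -(j * (l+1)) = j * (n - 2*l - 1) := by ring
  rw [h1, h2, h3, h4]; ring

lemma qbinom_pascal {j : ℤ} (hj : 0 < j) (n l : ℕ) :
    qbinom j (n+1) (l+1)
      = xp (-(j * ((l:ℤ)+1))) * qbinom j n (l+1) + xp (j * ((n:ℤ)-(l:ℤ))) * qbinom j n l := by
  rcases lt_trichotomy l n with hln | rfl | hln
  · obtain ⟨d, rfl⟩ : ∃ d, n = l + 1 + d := ⟨n - l - 1, by omega⟩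
    rw [qbinom_eq j (by omega), qbinom_eq j (by omega), qbinom_eq j (by omega)]
    have e1 : l + 1 + d + 1 - (l + 1) = d + 1 := by omega
    have e2 : l + 1 + d - (l + 1) = d := by omega
    have e3 : l + 1 + d - l = d + 1 := by omega
    rw [e1, e2, e3]
    have hq : qint j ((l:ℤ) + 1 + d + 1)
        = xp (-(j * ((l:ℤ)+1))) * qint j ((d:ℤ) + 1) + xp (j * ((d:ℤ) + 1)) * qint j ((l:ℤ) + 1) := by
      have := qint_pascal j ((l:ℤ) + 1 + d) l
      rw [show (l:ℤ) + 1 + d - l = (d:ℤ) + 1 by ring] at this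
      exact this
    have hfn1 : qfact j (l + 1 + d + 1) = qfact j (l + 1 + d) * qint j ((l:ℤ) + 1 + d + 1) := by
      rw [qfact_succ]; push_cast; ring_nf
    have hfl1 : qfact j (l + 1) = qfact j l * qint j ((l:ℤ) + 1) := by
      rw [qfact_succ]
    have hfd1 : qfact j (d + 1) = qfact j d * qint j ((d:ℤ) + 1) := by
      rw [qfact_succ]
    rw [show ((l + 1 + d : ℕ) : ℤ) - (l:ℤ) = (d:ℤ) + 1 by push_cast; ring, hfn1, hq, hfl1, hfd1]
    have n1 := qfact_ne_zero_s11 hj (l + 1 + d)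
    have n2 := qfact_ne_zero_s11 hj l
    have n3 := qfact_ne_zero_s11 hj d
    have n4 := qint_ne_zero_s11 hj (show (0:ℤ) < (l:ℤ) + 1 by positivity)
    have n5 := qint_ne_zero_s11 hj (show (0:ℤ) < (d:ℤ) + 1 by positivity)
    field_simp
  · rw [qbinom_self hj, qbinom_of_gt (by omega), qbinom_self hj]
    simp [xp_zero]
  · rw [qbinom_of_gt (by omega), qbinom_of_gt (by omega), qbinom_of_gt (by omega)]
    simp

lemma step_scalar {j : ℤ} (hj : 0 < j) (w : KK) (J l : ℕ) :
    (-1:KK)^(l+1) * w^(l+1) * xp (j*((l:ℤ)+1)*(J:ℤ)) * qbinom j (J+1) (l+1)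
      = (-1:KK)^(l+1) * w^(l+1) * xp (j*((l:ℤ)+1)*((J:ℤ)-1)) * qbinom j J (l+1)
        - (w * xp (2*j*(J:ℤ))) * ((-1:KK)^l * w^l * xp (j*(l:ℤ)*((J:ℤ)-1)) * qbinom j J l) := by
  rw [qbinom_pascal hj J l]
  have e1 : xp (j*((l:ℤ)+1)*(J:ℤ)) * xp (-(j * ((l:ℤ)+1))) = xp (j*((l:ℤ)+1)*((J:ℤ)-1)) := by
    rw [← xp_add]; congr 1; ring
  have e2 : xp (j*((l:ℤ)+1)*(J:ℤ)) * xp (j*((J:ℤ)-(l:ℤ))) = xp (2*j*(J:ℤ)) * xp (j*(l:ℤ)*((J:ℤ)-1)) := by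
    rw [← xp_add, ← xp_add]; congr 1; ring
  linear_combination ((-1:KK))^(l+1) * w^(l+1) * qbinom j J (l+1) * e1
    + ((-1:KK))^(l+1) * w^(l+1) * qbinom j J l * e2

lemma prodP {j : ℤ} (hj : 0 < j) (J : ℕ) (w : KK) :
    ∏ k ∈ Finset.range J, (1 - Polynomial.C (w * xp (2 * j * (k:ℤ))) * Polynomial.X)
    = ∑ l ∈ Finset.range (J + 1),
        Polynomial.C ((-1:KK)^l * w^l * xp (j * (l:ℤ) * ((J:ℤ) - 1)) * qbinom j J l)
          * Polynomial.X ^ l := by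
  induction J with
  | zero => simp [qbinom_zero hj, xp_zero]
  | succ J ih =>
      rw [Finset.prod_range_succ, ih]
      have expand : (∑ l ∈ Finset.range (J + 1),
            Polynomial.C ((-1:KK)^l * w^l * xp (j * (l:ℤ) * ((J:ℤ) - 1)) * qbinom j J l)
              * Polynomial.X ^ l) * (1 - Polynomial.C (w * xp (2 * j * (J:ℤ))) * Polynomial.X)
          = (∑ l ∈ Finset.range (J + 1),
              Polynomial.C ((-1:KK)^l * w^l * xp (j * (l:ℤ) * ((J:ℤ) - 1)) * qbinom j J l)
                * Polynomial.X ^ l)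
            - ∑ l ∈ Finset.range (J + 1),
                Polynomial.C ((w * xp (2 * j * (J:ℤ))) *
                  ((-1:KK)^l * w^l * xp (j * (l:ℤ) * ((J:ℤ) - 1)) * qbinom j J l))
                  * Polynomial.X ^ (l+1) := by
        rw [mul_sub, mul_one, Finset.sum_mul]
        congr 1
        apply Finset.sum_congr rfl
        intro l _
        simp only [map_mul]
        ring
      rw [expand]
      rw [Finset.sum_range_succ' (fun l => Polynomial.C ((-1:KK)^l * w^l
        * xp (j * (l:ℤ) * ((J:ℤ) - 1)) * qbinom j J l) * Polynomial.X ^ l) J]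
      rw [Finset.sum_range_succ' (fun l => Polynomial.C ((-1:KK)^l * w^l
        * xp (j * (l:ℤ) * (((J+1 : ℕ) : ℤ) - 1)) * qbinom j (J+1) l) * Polynomial.X ^ l) (J+1)]
      rw [← sub_add_eq_add_sub]
      congr 1
      · have hz : qbinom j J (J + 1) = 0 := qbinom_of_gt (by omega)
        have ext : ∑ k ∈ Finset.range J,
              Polynomial.C ((-1:KK)^(k+1) * w^(k+1) * xp (j * ((k+1 : ℕ):ℤ) * ((J:ℤ) - 1))
                * qbinom j J (k+1)) * Polynomial.X ^ (k+1)
            = ∑ k ∈ Finset.range (J+1),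
              Polynomial.C ((-1:KK)^(k+1) * w^(k+1) * xp (j * ((k+1 : ℕ):ℤ) * ((J:ℤ) - 1))
                * qbinom j J (k+1)) * Polynomial.X ^ (k+1) := by
          rw [Finset.sum_range_succ, hz]
          simp
        rw [ext, ← Finset.sum_sub_distrib]
        apply Finset.sum_congr rfl
        intro k _
        rw [← sub_mul, ← map_sub]
        have := step_scalar hj w J k
        push_cast
        rw [← this]
        push_cast
        ring_nf
      · push_cast
        simp [qbinom_zero hj, xp_zero]

lemma xp_pow (a : ℤ) (s : ℕ) : xp a ^ s = xp (a * s) := by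
  rw [xp, xp, ← zpow_natCast, ← zpow_mul]

lemma xp_sum (s : Finset ℕ) (e : ℕ → ℤ) : xp (∑ k ∈ s, e k) = ∏ k ∈ s, xp (e k) := by
  classical
  induction s using Finset.cons_induction with
  | empty => simp [xp_zero]
  | cons a t ha ih => rw [Finset.sum_cons, Finset.prod_cons, xp_add, ih]

lemma prodP_eval {j : ℤ} (hj : 0 < j) (J : ℕ) (w : KK) :
    ∏ k ∈ Finset.range J, (1 - w * xp (2 * j * (k:ℤ)))
    = ∑ l ∈ Finset.range (J + 1),
        (-1:KK)^l * w^l * xp (j * (l:ℤ) * ((J:ℤ) - 1)) * qbinom j J l := by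
  have h := congrArg (Polynomial.eval (1:KK)) (prodP hj J w)
  simpa [Polynomial.eval_prod, Polynomial.eval_finset_sum] using h

lemma qfact_add (j : ℤ) (a b : ℕ) :
    qfact j (a + b) = qfact j a * ∏ k ∈ Finset.range b, qint j ((a:ℤ) + 1 + k) := by
  induction b with
  | zero => simp [qfact]
  | succ b ih =>
      rw [show a + (b + 1) = (a + b) + 1 from rfl, qfact_succ, ih, Finset.prod_range_succ,
        show ((a + b : ℕ) : ℤ) + 1 = (a:ℤ) + 1 + (b:ℤ) by push_cast; ring, mul_assoc]

lemma choose_two (j : ℕ) (hj : 1 ≤ j) : 2 * ((j.choose 2 : ℕ) : ℤ) = (j:ℤ) * ((j:ℤ) - 1) := by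
  have h : j.choose 2 * 2 = j * (j - 1) := by
    rw [Nat.choose_two_right, Nat.div_mul_cancel]
    obtain ⟨i, rfl⟩ : ∃ i, j = i + 1 := ⟨j - 1, by omega⟩
    have he : Even ((i + 1) * i) := by simpa [mul_comm] using Nat.even_mul_succ_self i
    simpa using he.two_dvd
  have := congrArg (fun x : ℕ => (x : ℤ)) h
  push_cast [Nat.cast_sub hj] at this
  linarith

lemma gauss_sum (J : ℕ) : (∑ k ∈ Finset.range J, (k:ℤ)) * 2 = (J:ℤ) * ((J:ℤ) - 1) := by
  induction J with
  | zero => simp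
  | succ J ih => rw [Finset.sum_range_succ]; push_cast; linarith

lemma lemB {j n : ℕ} (hj : 0 < j) (hn : 0 < n) :
    ∑ s ∈ Finset.range j,
      (-1:KK)^s * xp ((2*(n:ℤ) - (j:ℤ)) * (((j.choose 2 : ℕ):ℤ) - (j:ℤ)*(s:ℤ)))
        * qbinom (j:ℤ) (j-1) s
    = qfact (j:ℤ) (j-1) * qbinom (j:ℤ) (n-1) (j-1) := by
  have hjz : (0:ℤ) < (j:ℤ) := by exact_mod_cast hj
  set J : ℕ := j - 1 with hJdef
  have hJ : J + 1 = j := by omega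
  have hJc : (J:ℤ) = (j:ℤ) - 1 := by push_cast [hJdef, Nat.cast_sub hj]; ring
  set C2 : ℤ := ((j.choose 2 : ℕ) : ℤ) with hC2
  have hC2v : 2 * C2 = (j:ℤ) * ((j:ℤ) - 1) := choose_two j hj
  set w : KK := xp (2*(j:ℤ)*(1-(n:ℤ))) with hw
  -- Step 1: LHS = xp((2n-j)C2) * product
  have step1 : ∑ s ∈ Finset.range j,
      (-1:KK)^s * xp ((2*(n:ℤ) - (j:ℤ)) * (C2 - (j:ℤ)*(s:ℤ))) * qbinom (j:ℤ) J s
      = xp ((2*(n:ℤ) - (j:ℤ)) * C2) * ∏ k ∈ Finset.range J, (1 - w * xp (2*(j:ℤ)*(k:ℤ))) := by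
    rw [prodP_eval hjz J w, hJ, Finset.mul_sum]
    apply Finset.sum_congr rfl
    intro s _
    rw [hw, xp_pow,
      show (2*(n:ℤ) - (j:ℤ)) * (C2 - (j:ℤ)*(s:ℤ))
          = (2*(n:ℤ) - (j:ℤ))*C2 + ((2*(j:ℤ)*(1-(n:ℤ)))*(s:ℤ) + (j:ℤ)*(s:ℤ)*((J:ℤ)-1)) by
        rw [hJc]; ring,
      xp_add, xp_add]
    ring
  rw [step1]
  by_cases hnj : n < j
  · -- product has a zero factor at k = n-1
    have hmem : n - 1 ∈ Finset.range J := by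
      rw [Finset.mem_range]; omega
    rw [Finset.prod_eq_zero hmem, qbinom_of_gt (by omega), mul_zero, mul_zero]
    rw [hw, ← xp_add, show 2*(j:ℤ)*(1-(n:ℤ)) + 2*(j:ℤ)*((n-1:ℕ):ℤ) = 0 by
      push_cast [Nat.cast_sub hn]; ring, xp_zero, sub_self]
  · -- n ≥ j
    push_neg at hnj
    have fac : ∀ k ∈ Finset.range J, (1 - w * xp (2*(j:ℤ)*(k:ℤ)))
        = xp (-((j:ℤ) * ((n:ℤ)-1-(k:ℤ)))) * qint (j:ℤ) ((n:ℤ)-1-(k:ℤ)) := by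
      intro k _
      have h1 : xp (-((j:ℤ) * ((n:ℤ)-1-(k:ℤ)))) * qint (j:ℤ) ((n:ℤ)-1-(k:ℤ))
          = xp (-((j:ℤ) * ((n:ℤ)-1-(k:ℤ))) + (j:ℤ) * ((n:ℤ)-1-(k:ℤ)))
            - xp (-((j:ℤ) * ((n:ℤ)-1-(k:ℤ))) + -((j:ℤ) * ((n:ℤ)-1-(k:ℤ)))) := by
        rw [qint_eq, xp_add, xp_add]; ring
      rw [h1,
        show -((j:ℤ)*((n:ℤ)-1-(k:ℤ))) + (j:ℤ)*((n:ℤ)-1-(k:ℤ)) = 0 by ring,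
        show -((j:ℤ)*((n:ℤ)-1-(k:ℤ))) + -((j:ℤ)*((n:ℤ)-1-(k:ℤ)))
            = 2*(j:ℤ)*(1-(n:ℤ)) + 2*(j:ℤ)*(k:ℤ) by ring,
        xp_zero, hw, ← xp_add]
    rw [Finset.prod_congr rfl fac, Finset.prod_mul_distrib, ← xp_sum]
    have hprod : ∏ k ∈ Finset.range J, qint (j:ℤ) ((n:ℤ)-1-(k:ℤ))
        = qfact (j:ℤ) (n-1) / qfact (j:ℤ) (n-j) := by
      have h1 : qfact (j:ℤ) (n-1) = qfact (j:ℤ) (n-j)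
          * ∏ k ∈ Finset.range J, qint (j:ℤ) (((n-j:ℕ):ℤ) + 1 + (k:ℤ)) := by
        rw [← qfact_add (j:ℤ) (n-j) J, show n - j + J = n - 1 by omega]
      have h2 : ∏ k ∈ Finset.range J, qint (j:ℤ) (((n-j:ℕ):ℤ) + 1 + (k:ℤ))
          = ∏ k ∈ Finset.range J, qint (j:ℤ) ((n:ℤ)-1-(k:ℤ)) := by
        rw [← Finset.prod_range_reflect (fun k => qint (j:ℤ) ((n:ℤ)-1-(k:ℤ))) J]
        apply Finset.prod_congr rfl
        intro k hk
        rw [Finset.mem_range] at hk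
        congr 1
        omega
      rw [h1, h2, mul_comm, mul_div_assoc, div_self (qfact_ne_zero_s11 hjz _), mul_one]
    rw [hprod, qbinom_eq _ (by omega : j - 1 ≤ n - 1), show n - 1 - (j-1) = n - j by omega]
    have hexp : xp ((2*(n:ℤ) - (j:ℤ)) * C2)
        * xp (∑ k ∈ Finset.range J, -((j:ℤ) * ((n:ℤ)-1-(k:ℤ)))) = 1 := by
      rw [← xp_add, ← xp_zero]
      congr 1
      have hs : ∑ k ∈ Finset.range J, -((j:ℤ) * ((n:ℤ)-1-(k:ℤ)))
          = (j:ℤ) * (∑ k ∈ Finset.range J, (k:ℤ)) - (J:ℤ) * ((j:ℤ) * ((n:ℤ)-1)) := by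
        have hterm : ∀ k ∈ Finset.range J, -((j:ℤ) * ((n:ℤ)-1-(k:ℤ)))
            = (j:ℤ)*(k:ℤ) - (j:ℤ)*((n:ℤ)-1) := fun k _ => by ring
        rw [Finset.sum_congr rfl hterm, Finset.sum_sub_distrib,
          ← Finset.mul_sum, Finset.sum_const, Finset.card_range, nsmul_eq_mul]
      rw [hs]
      have hg := gauss_sum J
      have : 2 * ((2*(n:ℤ) - (j:ℤ)) * C2 + ((j:ℤ) * (∑ k ∈ Finset.range J, (k:ℤ))
          - (J:ℤ) * ((j:ℤ) * ((n:ℤ)-1)))) = 0 := by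
        rw [hJc] at hg ⊢
        linear_combination (2*(n:ℤ) - (j:ℤ)) * hC2v + (j:ℤ) * hg
      linarith
    rw [← mul_assoc, hexp, one_mul]
    have z1 := qfact_ne_zero_s11 hjz (n-j)
    have z2 := qfact_ne_zero_s11 hjz J
    field_simp
    rw [mul_div_assoc, show qfact (j:ℤ) J / qfact (j:ℤ) (j-1) = 1 from div_self z2, mul_one]

lemma lemC {j n : ℕ} (hj : 0 < j) (hn : 0 < n) :
    qint (j:ℤ) (n:ℤ) * qbinom (j:ℤ) (n-1) (j-1) = qint (j:ℤ) (j:ℤ) * qbinom (j:ℤ) n j := by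
  have hjz : (0:ℤ) < (j:ℤ) := by exact_mod_cast hj
  by_cases h : j ≤ n
  · rw [qbinom_eq _ (by omega : j-1 ≤ n-1), qbinom_eq _ h, show n-1-(j-1) = n-j by omega]
    have hn1 : qfact (j:ℤ) n = qfact (j:ℤ) (n-1) * qint (j:ℤ) (n:ℤ) := by
      have h0 := qfact_succ (j:ℤ) (n-1)
      rw [show (n-1)+1 = n by omega, show ((n-1:ℕ):ℤ) + 1 = (n:ℤ) by omega] at h0
      exact h0
    have hj1 : qfact (j:ℤ) j = qfact (j:ℤ) (j-1) * qint (j:ℤ) (j:ℤ) := by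
      have h0 := qfact_succ (j:ℤ) (j-1)
      rw [show (j-1)+1 = j by omega, show ((j-1:ℕ):ℤ) + 1 = (j:ℤ) by omega] at h0
      exact h0
    rw [hn1, hj1]
    have z1 := qfact_ne_zero_s11 hjz (n-1)
    have z2 := qfact_ne_zero_s11 hjz (j-1)
    have z3 := qfact_ne_zero_s11 hjz (n-j)
    have z4 := qint_ne_zero_s11 hjz hjz
    have z5 : qint (j:ℤ) (n:ℤ) ≠ 0 := qint_ne_zero_s11 hjz (by exact_mod_cast hn)
    field_simp
  · rw [qbinom_of_gt (by omega), qbinom_of_gt (by omega), mul_zero, mul_zero]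

theorem conifold_generating_function (j m : ℕ) (hj : 1 ≤ j) (hm : 1 ≤ m) :
    ∑ s ∈ Finset.range j,
        C ((-1 : RatFunc ℚ) ^ s *
              RatFunc.X ^ ((2 * (m : ℤ) - j) * ((j.choose 2 : ℤ) - (j : ℤ) * s)) /
            (qint j j * qfact j (j - s - 1) * qfact j s)) *
          ∏ k ∈ Finset.range j,
            (1 - C (RatFunc.X ^ ((2 * (j : ℤ)) * ((k : ℤ) - s))) * (X : Polynomial (RatFunc ℚ))) =
      ∑ l ∈ Finset.range (j + 1),
        C ((-1 : RatFunc ℚ) ^ l * (1 / qint j (m + l)) * qbinom j (m + l) j * qbinom j j l) *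
          (X : Polynomial (RatFunc ℚ)) ^ l := by

  have hjz : (0:ℤ) < (j:ℤ) := by exact_mod_cast hj
  have xp_def : ∀ a : ℤ, (RatFunc.X : KK) ^ a = xp a := fun _ => rfl
  have hC2v : 2 * ((j.choose 2 : ℕ):ℤ) = (j:ℤ) * ((j:ℤ) - 1) := choose_two j hj
  have hsummand : ∀ s ∈ Finset.range j,
      Polynomial.C ((-1 : KK) ^ s *
            RatFunc.X ^ ((2 * (m : ℤ) - j) * ((j.choose 2 : ℤ) - (j : ℤ) * s)) /
          (qint j j * qfact j (j - s - 1) * qfact j s)) *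
        ∏ k ∈ Finset.range j,
          (1 - Polynomial.C (RatFunc.X ^ ((2 * (j : ℤ)) * ((k : ℤ) - s))) * (Polynomial.X : Polynomial KK))
      = ∑ l ∈ Finset.range (j+1),
          Polynomial.C (((-1 : KK) ^ s *
              RatFunc.X ^ ((2 * (m : ℤ) - j) * ((j.choose 2 : ℤ) - (j : ℤ) * s)) /
            (qint j j * qfact j (j - s - 1) * qfact j s)) *
            ((-1:KK)^l * (xp (-(2*(j:ℤ)*(s:ℤ))))^l * xp ((j:ℤ) * (l:ℤ) * ((j:ℤ) - 1))
              * qbinom (j:ℤ) j l)) * Polynomial.X ^ l := by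
    intro s hs
    have hfaceq : ∀ k ∈ Finset.range j,
        (1 - Polynomial.C (RatFunc.X ^ ((2 * (j : ℤ)) * ((k : ℤ) - (s:ℤ)))) * (Polynomial.X : Polynomial KK))
        = (1 - Polynomial.C (xp (-(2*(j:ℤ)*(s:ℤ))) * xp (2 * (j:ℤ) * (k:ℤ))) * Polynomial.X) := by
      intro k _
      rw [xp_def, show (2 * (j:ℤ)) * ((k:ℤ) - (s:ℤ)) = -(2*(j:ℤ)*(s:ℤ)) + 2*(j:ℤ)*(k:ℤ) by ring,
        xp_add]
    rw [Finset.prod_congr rfl hfaceq, prodP hjz j (xp (-(2*(j:ℤ)*(s:ℤ)))), Finset.mul_sum]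
    apply Finset.sum_congr rfl
    intro l _
    conv_rhs => rw [map_mul]
    ring
  rw [Finset.sum_congr rfl hsummand, Finset.sum_comm]
  apply Finset.sum_congr rfl
  intro l hl
  rw [← Finset.sum_mul, ← map_sum]
  congr 1
  have hml : 0 < m + l := by omega
  have hterm : ∀ s ∈ Finset.range j,
      ((-1 : KK) ^ s *
          RatFunc.X ^ ((2 * (m : ℤ) - j) * ((j.choose 2 : ℤ) - (j : ℤ) * s)) /
        (qint j j * qfact j (j - s - 1) * qfact j s)) *
        ((-1:KK)^l * (xp (-(2*(j:ℤ)*(s:ℤ))))^l * xp ((j:ℤ) * (l:ℤ) * ((j:ℤ) - 1))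
          * qbinom (j:ℤ) j l)
      = ((-1:KK)^l * qbinom (j:ℤ) j l / qfact (j:ℤ) j) *
          ((-1:KK)^s * xp ((2*((m+l : ℕ):ℤ) - (j:ℤ)) * (((j.choose 2 : ℕ):ℤ) - (j:ℤ)*(s:ℤ)))
            * qbinom (j:ℤ) (j-1) s) := by
    intro s hs
    rw [Finset.mem_range] at hs
    rw [xp_def, xp_pow, show j - s - 1 = j - 1 - s by omega,
      qbinom_eq (j:ℤ) (by omega : s ≤ j - 1),
      show (2*((m+l : ℕ):ℤ) - (j:ℤ)) * (((j.choose 2 : ℕ):ℤ) - (j:ℤ)*(s:ℤ))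
          = (2 * (m : ℤ) - j) * ((j.choose 2 : ℤ) - (j : ℤ) * s)
            + (-(2*(j:ℤ)*(s:ℤ)) * (l:ℤ) + (j:ℤ) * (l:ℤ) * ((j:ℤ) - 1)) by
        push_cast
        linear_combination (l:ℤ) * hC2v,
      xp_add, xp_add]
    have hj1 : qfact (j:ℤ) j = qfact (j:ℤ) (j-1) * qint (j:ℤ) (j:ℤ) := by
      have h0 := qfact_succ (j:ℤ) (j-1)
      rw [show (j-1)+1 = j by omega, show ((j-1:ℕ):ℤ) + 1 = (j:ℤ) by omega] at h0
      exact h0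
    rw [hj1]
    have z1 := qfact_ne_zero_s11 hjz (j-1)
    have z2 := qfact_ne_zero_s11 hjz (j-1-s)
    have z3 := qfact_ne_zero_s11 hjz s
    have z4 := qint_ne_zero_s11 hjz hjz
    field_simp
  rw [Finset.sum_congr rfl hterm, ← Finset.mul_sum, lemB hj hml]
  have hlemC := lemC hj hml
  have hj1 : qfact (j:ℤ) j = qfact (j:ℤ) (j-1) * qint (j:ℤ) (j:ℤ) := by
    have h0 := qfact_succ (j:ℤ) (j-1)
    rw [show (j-1)+1 = j by omega, show ((j-1:ℕ):ℤ) + 1 = (j:ℤ) by omega] at h0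
    exact h0
  rw [hj1]
  have z1 := qfact_ne_zero_s11 hjz (j-1)
  have z4 := qint_ne_zero_s11 hjz hjz
  have z5 : qint (j:ℤ) ((m:ℤ) + (l:ℤ)) ≠ 0 := by
    have := qint_ne_zero_s11 hjz (show (0:ℤ) < (m:ℤ)+(l:ℤ) by exact_mod_cast hml)
    exact this
  have hcast : ((m + l : ℕ) : ℤ) = (m:ℤ) + (l:ℤ) := by push_cast; ring
  rw [hcast] at hlemC
  congr 1
  field_simp
  linear_combination (qbinom (j:ℤ) j l) * hlemC
end
end
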